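/- Let A = Gr(x₁,…,x₆)/(x₁x₂, x₁x₃, x₁x₄, x₂x₅, x₂x₆, x₃x₄, x₅x₆) with differential D(ξ) = (x₁+⋯+x₆)ξ. Then the homology in degree 1 has dimension 0 and the homology in degree 2 has dimension 3; i.e., among D(x₁),…,D(x₆), exactly 5 are linearly independent, and the degree-2 component has dimension 8. -/

import Mathlib

noncomputable section
open Module LinearMap

/-- The generator `xᵢ` of the exterior (Grassmann) algebra on the generating set `V`. -/
def gGen (K : Type*) [Field K] (V : Type*) [DecidableEq V] (i : V) :
    ExteriorAlgebra K (V → K) :=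
  ExteriorAlgebra.ι K (Pi.single i 1)

/-- The relation identifying with `0` the quadratic monomials `xᵢxⱼ` for edges `{i,j}`
of the graph `G`. -/
def graphRel (K : Type*) [Field K] (V : Type*) [DecidableEq V] (G : SimpleGraph V) :
    ExteriorAlgebra K (V → K) → ExteriorAlgebra K (V → K) → Prop :=
  fun u v => ∃ i j : V, G.Adj i j ∧ u = gGen K V i * gGen K V j ∧ v = 0

/-- The monomial quotient `A_G = Gr(V)/⟨xᵢxⱼ : {i,j} ∈ E(G)⟩` of the Grassmann algebra. -/
abbrev GraphAlg (K : Type*) [Field K] (V : Type*) [DecidableEq V] (G : SimpleGraph V) :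
    Type _ :=
  RingQuot (graphRel K V G)

/-- The differential `D(ξ) = (Σ_{x∈V} x)·ξ` on `A_G`. -/
def graphD (K : Type*) [Field K] (V : Type*) [Fintype V] [DecidableEq V]
    (G : SimpleGraph V) : GraphAlg K V G →ₗ[K] GraphAlg K V G :=
  LinearMap.mulLeft K (∑ i : V, RingQuot.mkAlgHom K (graphRel K V G) (gGen K V i))

/-- The dimension of the homology `H(A_G) = ker D / im D` (as `im D ⊆ ker D`). -/
def graphHdim (K : Type*) [Field K] (V : Type*) [Fintype V] [DecidableEq V]
    (G : SimpleGraph V) : ℕ :=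
  finrank K ↥(ker (graphD K V G)) - finrank K ↥(range (graphD K V G))

end

/-- The relation graph on six vertices with edges
`{1,2},{1,3},{1,4},{2,5},{2,6},{3,4},{5,6}` (here `0`-indexed), encoding the quotient
`A = Gr(x₁,…,x₆)/(x₁x₂, x₁x₃, x₁x₄, x₂x₅, x₂x₆, x₃x₄, x₅x₆)`. -/
def G16 : SimpleGraph (Fin 6) :=
  SimpleGraph.fromRel fun i j =>
    (i, j) ∈ ([(0, 1), (0, 2), (0, 3), (1, 4), (1, 5), (2, 3), (4, 5)] : List (Fin 6 × Fin 6))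

/-!
Write `x_i` for the generators and `t = x₁ + ⋯ + x₆ = D(1)`. A representation of `Λ(K²)` by
`4 × 4` matrices sending `x_p ↦ e₁`, `x_q ↦ e₂` and the other generators to `0` is
compatible with the relations whenever `p` and `q` are not adjacent in `G`; it reads off the
coefficient `v_p w_q - v_q w_p` of `x_p x_q` in a product `(Σ v_i x_i)(Σ w_i x_i)`.
So the monomials `x_p x_q` with `p < q` non-adjacent form a basis of `A₂` (here `8` of them), and
the coefficient of `x_p x_q` in `D(Σ c_i x_i)` is `c_q - c_p`. Since `Gᶜ` is connected, the
kernel of `c ↦ D(Σ c_i x_i)` consists of the constants: `A₁ ∩ ker D = K t = D(A₀)` and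
`dim D(A₁) = 6 - 1`. Since `Gᶜ` is bipartite, hence triangle-free, every cubic monomial vanishes,
so `A₂ ⊆ ker D` and `dim H₂ = 8 - 5`.
-/

namespace GraphAlg

open Module LinearMap

section Wedge

variable (K : Type*) [Field K]

/- Left multiplication by `e₁`, `e₂` on `Λ(K²)` in the basis `1, e₂, e₁, e₁ ∧ e₂`; the entry
`(3, 0)` of `wedge₁ * wedge₂` is the coefficient of `e₁ ∧ e₂`. -/
def wedge₁ : Matrix (Fin 4) (Fin 4) K := !![0, 0, 0, 0; 0, 0, 0, 0; 1, 0, 0, 0; 0, 1, 0, 0]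

def wedge₂ : Matrix (Fin 4) (Fin 4) K := !![0, 0, 0, 0; 1, 0, 0, 0; 0, 0, 0, 0; 0, 0, -1, 0]

theorem wedge_mul_wedge (α β γ δ : K) :
    (α • wedge₁ K + β • wedge₂ K) * (γ • wedge₁ K + δ • wedge₂ K) =
      (α * δ - β * γ) • (wedge₁ K * wedge₂ K) := by
  ext i j
  fin_cases i <;> fin_cases j <;> simp [wedge₁, wedge₂, Matrix.mul_apply, Fin.sum_univ_four]
  ring

theorem wedge₁_mul_wedge₂_apply : (wedge₁ K * wedge₂ K) 3 0 = 1 := by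
  simp [wedge₁, wedge₂, Matrix.mul_apply, Fin.sum_univ_four]

variable {K} {V : Type*}

def wedgePair (p q : V) : (V → K) →ₗ[K] Matrix (Fin 4) (Fin 4) K :=
  (proj p).smulRight (wedge₁ K) + (proj q).smulRight (wedge₂ K)

theorem wedgePair_mul_wedgePair (p q : V) (v w : V → K) :
    wedgePair p q v * wedgePair p q w = (v p * w q - v q * w p) • (wedge₁ K * wedge₂ K) :=
  wedge_mul_wedge K _ _ _ _

def wedgeHom (p q : V) : ExteriorAlgebra K (V → K) →ₐ[K] Matrix (Fin 4) (Fin 4) K :=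
  ExteriorAlgebra.lift K ⟨wedgePair p q, fun v => by
    rw [wedgePair_mul_wedgePair, mul_comm, sub_self, zero_smul]⟩

theorem wedgeHom_ι_mul_ι (p q : V) (v w : V → K) :
    wedgeHom p q (ExteriorAlgebra.ι K v * ExteriorAlgebra.ι K w) =
      (v p * w q - v q * w p) • (wedge₁ K * wedge₂ K) := by
  rw [map_mul, wedgeHom, ExteriorAlgebra.lift_ι_apply, ExteriorAlgebra.lift_ι_apply,
    wedgePair_mul_wedgePair]

end Wedge

variable {K : Type*} [Field K] {V : Type*} [DecidableEq V] {G : SimpleGraph V}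

section Generators

variable (K G) in
def gen (i : V) : GraphAlg K V G :=
  RingQuot.mkAlgHom K (graphRel K V G) (gGen K V i)

variable (K G) in
def ι : (V → K) →ₗ[K] GraphAlg K V G :=
  (RingQuot.mkAlgHom K (graphRel K V G)).toLinearMap ∘ₗ ExteriorAlgebra.ι K

theorem ι_single (i : V) : ι K G (Pi.single i 1) = gen K G i := rfl

theorem ι_mul_self (v : V → K) : ι K G v * ι K G v = 0 := by
  simp only [ι, comp_apply, AlgHom.toLinearMap_apply, ← map_mul, ExteriorAlgebra.ι_sq_zero,
    map_zero]

theorem ι_mul_comm (v w : V → K) : ι K G v * ι K G w = -(ι K G w * ι K G v) := by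
  refine eq_neg_of_add_eq_zero_left ?_
  simp only [ι, comp_apply, AlgHom.toLinearMap_apply, ← map_mul, ← map_add,
    ExteriorAlgebra.ι_add_mul_swap, map_zero]

theorem gen_mul_gen_comm (i j : V) : gen K G i * gen K G j = -(gen K G j * gen K G i) :=
  ι_mul_comm _ _

theorem gen_mul_gen_of_adj {i j : V} (h : G.Adj i j) : gen K G i * gen K G j = 0 := by
  rw [gen, gen, ← map_mul, RingQuot.mkAlgHom_rel K ⟨i, j, h, rfl, rfl⟩, map_zero]

theorem gen_mul_gen_of_not_adj_compl {i j : V} (h : ¬ Gᶜ.Adj i j) :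
    gen K G i * gen K G j = 0 := by
  rw [SimpleGraph.compl_adj, not_and_or, not_not, not_not] at h
  rcases h with rfl | h
  · rw [← ι_single, ι_mul_self]
  · exact gen_mul_gen_of_adj h

theorem gen_mul_gen_mul_gen (hG : Gᶜ.CliqueFree 3) (a b c : V) :
    gen K G a * gen K G b * gen K G c = 0 := by
  by_cases hab : Gᶜ.Adj a b
  · by_cases hbc : Gᶜ.Adj b c
    · by_cases hac : Gᶜ.Adj a c
      · exact absurd (SimpleGraph.is3Clique_triple_iff.mpr ⟨hab, hac, hbc⟩) (hG _)
      · rw [gen_mul_gen_comm a b, neg_mul, mul_assoc, gen_mul_gen_of_not_adj_compl hac,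
          mul_zero, neg_zero]
    · rw [mul_assoc, gen_mul_gen_of_not_adj_compl hbc, mul_zero]
  · rw [gen_mul_gen_of_not_adj_compl hab, zero_mul]

theorem range_ι [Fintype V] : range (ι K G) = Submodule.span K (Set.range (gen K G)) := by
  rw [← Submodule.map_top, ← (Pi.basisFun K V).span_eq, Submodule.map_span, ← Set.range_comp]
  congr 2
  funext i
  rw [Function.comp_apply, Pi.basisFun_apply, ι_single]

theorem graphD_apply [Fintype V] (u : GraphAlg K V G) : graphD K V G u = ι K G 1 * u := by
  rw [graphD, mulLeft_apply, ← Finset.univ_sum_single (1 : V → K), map_sum]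
  rfl

theorem graphD_ι_one [Fintype V] : graphD K V G (ι K G 1) = 0 := by
  rw [graphD_apply, ι_mul_self]

end Generators

section Minor

theorem single_mul_single_of_adj {p q a b : V} (hpq : ¬ G.Adj p q) (hab : G.Adj a b) :
    (Pi.single a 1 : V → K) p * (Pi.single b 1 : V → K) q = 0 := by
  by_cases hp : p = a
  · by_cases hq : q = b
    · subst hp hq
      exact absurd hab hpq
    · simp [Pi.single_apply, hq]
  · simp [Pi.single_apply, hp]

def minorHom {p q : V} (h : ¬ G.Adj p q) : GraphAlg K V G →ₐ[K] Matrix (Fin 4) (Fin 4) K :=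
  RingQuot.liftAlgHom K ⟨wedgeHom p q, by
    rintro _ _ ⟨a, b, hab, rfl, rfl⟩
    rw [gGen, gGen, wedgeHom_ι_mul_ι, single_mul_single_of_adj h hab,
      single_mul_single_of_adj (fun h' => h h'.symm) hab, sub_zero, zero_smul, map_zero]⟩

def minor {p q : V} (h : ¬ G.Adj p q) : GraphAlg K V G →ₗ[K] K :=
  Matrix.entryLinearMap K K 3 0 ∘ₗ (minorHom h).toLinearMap

theorem minor_ι_mul_ι {p q : V} (h : ¬ G.Adj p q) (v w : V → K) :
    minor h (ι K G v * ι K G w) = v p * w q - v q * w p := by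
  simp only [minor, ι, comp_apply, AlgHom.toLinearMap_apply, ← map_mul, minorHom,
    RingQuot.liftAlgHom_mkAlgHom_apply, wedgeHom_ι_mul_ι, Matrix.entryLinearMap_apply,
    Matrix.smul_apply, wedge₁_mul_wedge₂_apply, smul_eq_mul, mul_one]

end Minor

section DegreeOne

variable [Fintype V]

theorem minor_graphD_ι {p q : V} (h : ¬ G.Adj p q) (c : V → K) :
    minor h (graphD K V G (ι K G c)) = c q - c p := by
  rw [graphD_apply, minor_ι_mul_ι, Pi.one_apply, Pi.one_apply, one_mul, one_mul]

theorem eq_of_graphD_ι_eq_zero {c : V → K} (hc : graphD K V G (ι K G c) = 0) {p q : V}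
    (h : Gᶜ.Adj p q) : c p = c q := by
  have h' := minor_graphD_ι h.2 c
  rw [hc, map_zero] at h'
  exact (sub_eq_zero.mp h'.symm).symm

theorem ker_graphD_comp_ι (hG : Gᶜ.Connected) : ker (graphD K V G ∘ₗ ι K G) = K ∙ 1 := by
  refine le_antisymm (fun c hc => ?_) ?_
  · obtain ⟨p⟩ := hG.nonempty
    have hconst (q : V) : c q = c p := by
      induction (SimpleGraph.reachable_iff_reflTransGen p q).mp (hG p q) with
      | refl => rfl
      | tail _ hadj ih => exact (eq_of_graphD_ι_eq_zero hc hadj).symm.trans ih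
    exact Submodule.mem_span_singleton.mpr ⟨c p, funext fun q => by simp [hconst q]⟩
  · rw [Submodule.span_singleton_le_iff_mem, mem_ker, comp_apply, graphD_ι_one]

theorem finrank_map_graphD_span_range_gen (hG : Gᶜ.Connected) :
    finrank K (Submodule.map (graphD K V G) (Submodule.span K (Set.range (gen K G)))) =
      Fintype.card V - 1 := by
  have := hG.nonempty
  have h := finrank_range_add_finrank_ker (graphD K V G ∘ₗ ι K G)
  rw [ker_graphD_comp_ι hG, finrank_span_singleton one_ne_zero, finrank_fintype_fun_eq_card,
    range_comp, range_ι] at h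
  omega

theorem span_range_gen_inf_ker_graphD (hG : Gᶜ.Connected) :
    Submodule.span K (Set.range (gen K G)) ⊓ ker (graphD K V G) =
      Submodule.map (graphD K V G) (K ∙ 1) := by
  rw [Submodule.map_span, Set.image_singleton, graphD_apply, mul_one, ← range_ι]
  refine le_antisymm ?_ ?_
  · rintro _ ⟨⟨c, rfl⟩, hc⟩
    obtain ⟨a, rfl⟩ := Submodule.mem_span_singleton.mp
      ((ker_graphD_comp_ι hG).le (show c ∈ ker (graphD K V G ∘ₗ ι K G) from hc))
    exact Submodule.mem_span_singleton.mpr ⟨a, (map_smul _ _ _).symm⟩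
  · rw [Submodule.span_singleton_le_iff_mem]
    exact ⟨mem_range_self _ _, graphD_ι_one⟩

end DegreeOne

section DegreeTwo

theorem span_gen_mul_gen_le_ker_graphD [Fintype V] (hG : Gᶜ.CliqueFree 3) :
    Submodule.span K {u | ∃ i j, u = gen K G i * gen K G j} ≤ ker (graphD K V G) := by
  rw [Submodule.span_le]
  rintro _ ⟨i, j, rfl⟩
  rw [SetLike.mem_coe, mem_ker, graphD_apply, ← Finset.univ_sum_single (1 : V → K), map_sum,
    Finset.sum_mul]
  exact Finset.sum_eq_zero fun k _ => by
    rw [Pi.one_apply, ι_single, ← mul_assoc, gen_mul_gen_mul_gen hG]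

variable [LinearOrder V]

variable (G) in
def NonEdge : Type _ := {pq : V × V // pq.1 < pq.2 ∧ ¬ G.Adj pq.1 pq.2}

instance [Fintype V] [DecidableRel G.Adj] : Fintype (NonEdge G) := Subtype.fintype _

variable (K) in
def monomial (s : NonEdge G) : GraphAlg K V G := gen K G s.1.1 * gen K G s.1.2

theorem minor_monomial_self (s : NonEdge G) : minor s.2.2 (monomial K s) = 1 := by
  rw [monomial, ← ι_single, ← ι_single, minor_ι_mul_ι]
  simp [s.2.1.ne']

theorem minor_monomial_of_ne {s t : NonEdge G} (h : s ≠ t) : minor t.2.2 (monomial K s) = 0 := by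
  have h₁ : ¬ (t.1.1 = s.1.1 ∧ t.1.2 = s.1.2) := fun ⟨h₁, h₂⟩ =>
    h (Subtype.ext (Prod.ext h₁.symm h₂.symm))
  have h₂ : ¬ (t.1.2 = s.1.1 ∧ t.1.1 = s.1.2) := fun ⟨h₁, h₂⟩ =>
    lt_asymm s.2.1 (by rw [← h₁, ← h₂]; exact t.2.1)
  rw [monomial, ← ι_single, ← ι_single, minor_ι_mul_ι]
  simp only [Pi.single_apply]
  split_ifs <;> simp_all

theorem linearIndependent_monomial : LinearIndependent K (monomial K (G := G)) := by
  classical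
  refine LinearIndependent.of_comp (LinearMap.pi fun t : NonEdge G => minor t.2.2) ?_
  convert Pi.linearIndependent_single_one (NonEdge G) K using 1
  funext s t
  by_cases h : s = t
  · subst h
    simp [minor_monomial_self]
  · simp [minor_monomial_of_ne h, Ne.symm h]
  rfl

theorem gen_mul_gen_mem_span_monomial (i j : V) :
    gen K G i * gen K G j ∈ Submodule.span K (Set.range (monomial K (G := G))) := by
  have hmem (s : NonEdge G) : monomial K s ∈ Submodule.span K (Set.range (monomial K)) :=
    Submodule.subset_span ⟨s, rfl⟩
  by_cases h : Gᶜ.Adj i j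
  · rcases h.1.lt_or_gt with hij | hji
    · exact hmem ⟨(i, j), hij, h.2⟩
    · rw [gen_mul_gen_comm]
      exact neg_mem (hmem ⟨(j, i), hji, fun h' => h.2 h'.symm⟩)
  · rw [gen_mul_gen_of_not_adj_compl h]
    exact zero_mem _

theorem span_gen_mul_gen :
    Submodule.span K {u | ∃ i j, u = gen K G i * gen K G j} =
      Submodule.span K (Set.range (monomial K (G := G))) := by
  refine le_antisymm (Submodule.span_le.mpr ?_) (Submodule.span_le.mpr ?_)
  · rintro _ ⟨i, j, rfl⟩
    exact gen_mul_gen_mem_span_monomial i j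
  · rintro _ ⟨s, rfl⟩
    exact Submodule.subset_span ⟨s.1.1, s.1.2, rfl⟩

theorem finrank_span_gen_mul_gen [Fintype V] [DecidableRel G.Adj] :
    finrank K (Submodule.span K {u | ∃ i j, u = gen K G i * gen K G j}) =
      Fintype.card (NonEdge G) := by
  rw [span_gen_mul_gen, finrank_span_eq_card linearIndependent_monomial]

end DegreeTwo

end GraphAlg

instance : DecidableRel G16.Adj := fun i j =>
  decidable_of_iff _ (SimpleGraph.fromRel_adj _ i j).symm

theorem compl_G16_connected : G16ᶜ.Connected := by
  have h (v : Fin 6) : G16ᶜ.Reachable 4 v := by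
    have h42 : G16ᶜ.Reachable 4 2 := (show G16ᶜ.Adj 4 2 by decide).reachable
    fin_cases v
    · exact (show G16ᶜ.Adj 4 0 by decide).reachable
    · exact h42.trans (show G16ᶜ.Adj 2 1 by decide).reachable
    · exact h42
    · exact (show G16ᶜ.Adj 4 3 by decide).reachable
    · rfl
    · exact h42.trans (show G16ᶜ.Adj 2 5 by decide).reachable
  exact ⟨fun u v => (h u).symm.trans (h v)⟩

theorem compl_G16_cliqueFree : G16ᶜ.CliqueFree 3 :=
  SimpleGraph.Colorable.cliqueFree ⟨SimpleGraph.Coloring.mk ![0, 1, 0, 0, 1, 1] (by decide)⟩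
    (by norm_num : (2 : ℕ) < 3)

theorem card_nonEdge_G16 : Fintype.card (GraphAlg.NonEdge G16) = 8 := by
  decide

open Module LinearMap in
theorem stmt16_general (K : Type*) [Field K] :
    (letI g : Fin 6 → GraphAlg K (Fin 6) G16 :=
        fun i => RingQuot.mkAlgHom K (graphRel K (Fin 6) G16) (gGen K (Fin 6) i)
     letI D := graphD K (Fin 6) G16
     letI V0 : Submodule K (GraphAlg K (Fin 6) G16) := Submodule.span K {(1 : GraphAlg K (Fin 6) G16)}
     letI V1 : Submodule K (GraphAlg K (Fin 6) G16) := Submodule.span K (Set.range g)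
     letI V2 : Submodule K (GraphAlg K (Fin 6) G16) :=
        Submodule.span K {u | ∃ i j : Fin 6, u = g i * g j}
     finrank K ↥(Submodule.map D V1) = 5 ∧
     finrank K ↥V2 = 8 ∧
     finrank K ↥(V1 ⊓ ker D) = finrank K ↥(Submodule.map D V0) ∧
     finrank K ↥(V2 ⊓ ker D) - finrank K ↥(Submodule.map D V1) = 3) := by
  have hD1 : finrank K (Submodule.map (graphD K (Fin 6) G16)
      (Submodule.span K (Set.range (GraphAlg.gen K G16)))) = 5 :=
    GraphAlg.finrank_map_graphD_span_range_gen compl_G16_connected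
  have hV2 : finrank K (Submodule.span K
      {u | ∃ i j, u = GraphAlg.gen K G16 i * GraphAlg.gen K G16 j}) = 8 := by
    rw [GraphAlg.finrank_span_gen_mul_gen, card_nonEdge_G16]
  have hH1 := congrArg (fun W : Submodule K _ => finrank K W)
    (GraphAlg.span_range_gen_inf_ker_graphD (K := K) compl_G16_connected)
  have hH2 := hV2
  rw [← inf_eq_left.mpr (GraphAlg.span_gen_mul_gen_le_ker_graphD compl_G16_cliqueFree)] at hH2
  exact ⟨hD1, hV2, hH1, congrArg₂ (· - ·) hH2 hD1⟩

open Module LinearMap in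
/-- For `A = Gr(x₁,…,x₆)/(x₁x₂, x₁x₃, x₁x₄, x₂x₅, x₂x₆, x₃x₄, x₅x₆)` with
`D(ξ) = (x₁+⋯+x₆)ξ`: among `D(x₁),…,D(x₆)` exactly `5` are linearly independent, the
degree-`2` component has dimension `8`, the homology in degree `1` vanishes
(`dim (ker D ∩ A₁) = dim D(A₀)`), and the homology in degree `2` has dimension `3`. -/
theorem stmt16 (K : Type*) [Field K] [CharZero K] :
    (letI g : Fin 6 → GraphAlg K (Fin 6) G16 :=
        fun i => RingQuot.mkAlgHom K (graphRel K (Fin 6) G16) (gGen K (Fin 6) i)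
     letI D := graphD K (Fin 6) G16
     letI V0 : Submodule K (GraphAlg K (Fin 6) G16) := Submodule.span K {(1 : GraphAlg K (Fin 6) G16)}
     letI V1 : Submodule K (GraphAlg K (Fin 6) G16) := Submodule.span K (Set.range g)
     letI V2 : Submodule K (GraphAlg K (Fin 6) G16) :=
        Submodule.span K {u | ∃ i j : Fin 6, u = g i * g j}
     finrank K ↥(Submodule.map D V1) = 5 ∧
     finrank K ↥V2 = 8 ∧
     finrank K ↥(V1 ⊓ ker D) = finrank K ↥(Submodule.map D V0) ∧
     finrank K ↥(V2 ⊓ ker D) - finrank K ↥(Submodule.map D V1) = 3) :=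
  stmt16_general K
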